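/- arXiv:1812.00795 — 2 statements merged into one kernel-verified Lean document; each statement's English description precedes it below -/
import Mathlib

section
/- Under the critical regime, regularity, and heavy-tail conditions, the integral ∫_{ℝᵈ} |â(p)| / (2 - â(p) - â(-p)) dp is finite (for d = 1 or d = 2). -/
open MeasureTheory Filter Asymptotics Metric Set

lemma aux_ball_rpow {d : ℕ} (hd0 : 0 < d) {α δ : ℝ} (hα0 : 0 < α) (hαd : α < d) (hδ : 0 < δ) :
    IntegrableOn (fun p : EuclideanSpace ℝ (Fin d) => ‖p‖ ^ (-α)) (ball 0 δ) := by
  have hfr : Module.finrank ℝ (EuclideanSpace ℝ (Fin d)) = d := finrank_euclideanSpace_fin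
  have hnn : ∀ p : EuclideanSpace ℝ (Fin d), 0 ≤ ‖p‖ ^ (-α) :=
    fun p => Real.rpow_nonneg (norm_nonneg _) _
  have hmeas : AEStronglyMeasurable (fun p : EuclideanSpace ℝ (Fin d) => ‖p‖ ^ (-α))
      (volume.restrict (ball 0 δ)) := by
    have hc : Continuous fun p : EuclideanSpace ℝ (Fin d) => ‖p‖ ^ α :=
      continuous_norm.rpow_const (fun x => Or.inr hα0.le)
    have hm : Measurable fun p : EuclideanSpace ℝ (Fin d) => ‖p‖ ^ (-α) := by
      simp_rw [Real.rpow_neg (norm_nonneg _)]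
      exact hc.measurable.inv
    exact hm.aestronglyMeasurable
  refine ⟨hmeas, ?_⟩
  rw [hasFiniteIntegral_iff_ofReal (Eventually.of_forall hnn),
    lintegral_eq_lintegral_meas_le _ (Eventually.of_forall hnn) hmeas.aemeasurable]
  set s : ℝ := -α⁻¹ * d with hs_def
  have hs_lt : s < -1 := by
    rw [hs_def, neg_mul]
    rw [neg_lt_neg_iff]
    rw [show (1 : ℝ) = α⁻¹ * α by field_simp]
    exact (mul_lt_mul_iff_right₀ (by positivity)).2 hαd
  -- key set inclusion
  have hsub : ∀ t : ℝ, 0 < t →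
      {p : EuclideanSpace ℝ (Fin d) | t ≤ ‖p‖ ^ (-α)} ⊆ closedBall 0 (t ^ (-α⁻¹)) := by
    intro t ht p hp
    simp only [mem_setOf_eq] at hp
    have hp0 : p ≠ 0 := by
      rintro rfl
      rw [norm_zero, Real.zero_rpow (neg_ne_zero.2 hα0.ne')] at hp
      linarith
    have hnp : 0 < ‖p‖ := norm_pos_iff.2 hp0
    rw [mem_closedBall_zero_iff]
    have h1 : ‖p‖ ^ α ≤ t⁻¹ := by
      rw [Real.rpow_neg hnp.le] at hp
      exact ((le_inv_comm₀ ht (by positivity)).1 hp)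
    calc ‖p‖ = (‖p‖ ^ α) ^ α⁻¹ := (Real.rpow_rpow_inv hnp.le hα0.ne').symm
      _ ≤ (t⁻¹) ^ α⁻¹ := Real.rpow_le_rpow (by positivity) h1 (by positivity)
      _ = t ^ (-α⁻¹) := by
          rw [← Real.rpow_neg_one t, ← Real.rpow_mul ht.le]
          norm_num
  have hsplit : Ioc (0:ℝ) 1 ∪ Ioi (1:ℝ) = Ioi 0 := Ioc_union_Ioi_eq_Ioi zero_le_one
  rw [← hsplit]
  refine lt_of_le_of_lt (lintegral_union_le _ _ _) ?_
  have h1 : ∫⁻ t in Ioc (0:ℝ) 1,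
      (volume.restrict (ball (0 : EuclideanSpace ℝ (Fin d)) δ))
        {p | t ≤ ‖p‖ ^ (-α)} < ⊤ := by
    calc ∫⁻ t in Ioc (0:ℝ) 1, (volume.restrict (ball (0 : EuclideanSpace ℝ (Fin d)) δ))
          {p | t ≤ ‖p‖ ^ (-α)}
        ≤ ∫⁻ _ in Ioc (0:ℝ) 1, volume (ball (0 : EuclideanSpace ℝ (Fin d)) δ) := by
          refine lintegral_mono fun t => ?_
          refine le_trans (measure_mono (subset_univ _)) ?_
          rw [Measure.restrict_apply_univ]
      _ = volume (ball (0 : EuclideanSpace ℝ (Fin d)) δ) * volume (Ioc (0:ℝ) 1) :=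
          setLIntegral_const _ _
      _ < ⊤ := by
          refine ENNReal.mul_lt_top measure_ball_lt_top ?_
          simp [Real.volume_Ioc]
  have h2 : ∫⁻ t in Ioi (1:ℝ),
      (volume.restrict (ball (0 : EuclideanSpace ℝ (Fin d)) δ))
        {p | t ≤ ‖p‖ ^ (-α)} < ⊤ := by
    have hb : ∀ t ∈ Ioi (1:ℝ),
        (volume.restrict (ball (0 : EuclideanSpace ℝ (Fin d)) δ)) {p | t ≤ ‖p‖ ^ (-α)}
          ≤ ENNReal.ofReal (t ^ s) * volume (ball (0 : EuclideanSpace ℝ (Fin d)) 1) := by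
      intro t ht
      have ht0 : (0:ℝ) < t := lt_trans one_pos ht
      calc (volume.restrict (ball (0 : EuclideanSpace ℝ (Fin d)) δ)) {p | t ≤ ‖p‖ ^ (-α)}
          ≤ volume {p : EuclideanSpace ℝ (Fin d) | t ≤ ‖p‖ ^ (-α)} :=
            Measure.restrict_apply_le _ _
        _ ≤ volume (closedBall (0 : EuclideanSpace ℝ (Fin d)) (t ^ (-α⁻¹))) :=
            measure_mono (hsub t ht0)
        _ = ENNReal.ofReal ((t ^ (-α⁻¹)) ^ Module.finrank ℝ (EuclideanSpace ℝ (Fin d))) *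
              volume (ball (0 : EuclideanSpace ℝ (Fin d)) 1) :=
            Measure.addHaar_closedBall _ _ (Real.rpow_nonneg ht0.le _)
        _ = ENNReal.ofReal (t ^ s) * volume (ball (0 : EuclideanSpace ℝ (Fin d)) 1) := by
            rw [hfr, ← Real.rpow_natCast (t ^ (-α⁻¹)) d, ← Real.rpow_mul ht0.le]
    calc ∫⁻ t in Ioi (1:ℝ), (volume.restrict (ball (0 : EuclideanSpace ℝ (Fin d)) δ))
          {p | t ≤ ‖p‖ ^ (-α)}
        ≤ ∫⁻ t in Ioi (1:ℝ),
            ENNReal.ofReal (t ^ s) * volume (ball (0 : EuclideanSpace ℝ (Fin d)) 1) :=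
          setLIntegral_mono_ae (by fun_prop) (Eventually.of_forall hb)
      _ = (∫⁻ t in Ioi (1:ℝ), ENNReal.ofReal (t ^ s)) *
            volume (ball (0 : EuclideanSpace ℝ (Fin d)) 1) := by
          rw [lintegral_mul_const'' _ (by fun_prop)]
      _ < ⊤ := by
          refine ENNReal.mul_lt_top ?_ measure_ball_lt_top
          have hint := integrableOn_Ioi_rpow_of_lt hs_lt one_pos
          refine lt_of_le_of_lt (lintegral_mono fun t => ?_) hint.2
          exact Real.ofReal_le_enorm _
  exact ENNReal.add_lt_top.2 ⟨h1, h2⟩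

theorem stmt1 {d : ℕ} (hd : d = 1 ∨ d = 2)
    (a : EuclideanSpace ℝ (Fin d) → ℝ) (ha_nn : ∀ u, 0 ≤ a u)
    (ha_int : Integrable a) (ha_norm : ∫ u, a u = 1)
    (hata : EuclideanSpace ℝ (Fin d) → ℂ)
    (hhat : hata = fun p => ∫ u, Complex.exp (-(Complex.I * ((inner ℝ p u : ℝ) : ℂ))) * (a u : ℂ))
    (hhat_int : Integrable fun p => ‖hata p‖)
    (A : EuclideanSpace ℝ (Fin d) → ℝ)
    (hA : A = fun p => 2 * ∫ u, Real.cos (inner ℝ p u) * a u)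
    (hAre : ∀ p, hata p + hata (-p) = (A p : ℂ))
    (c₁ α : ℝ) (hc₁ : 0 < c₁) (hα0 : 0 < α) (hα2 : α < 2) (hα1 : d = 1 → α < 1)
    (hexp : (fun p => A p - (2 - c₁ * ‖p‖ ^ α)) =o[nhds 0] fun p => ‖p‖ ^ α)
    (hcont : Continuous hata)
    (hlt : ∀ p : EuclideanSpace ℝ (Fin d), p ≠ 0 → ‖hata p‖ < 1)
    (hdecay : Tendsto hata (cocompact _) (nhds 0)) :
    Integrable (fun p => ‖hata p‖ / (2 - A p)) := by
  have hd0 : 0 < d := by rcases hd with h | h <;> omega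
  have hαd : α < (d : ℝ) := by
    rcases hd with h | h
    · rw [h]; exact_mod_cast hα1 h
    · rw [h]; exact_mod_cast hα2
  -- continuity of A
  have hA_eq : ∀ p, A p = (hata p + hata (-p)).re := by
    intro p
    rw [hAre p, Complex.ofReal_re]
  have hA_cont : Continuous A := by
    have : Continuous fun p : EuclideanSpace ℝ (Fin d) => (hata p + hata (-p)).re :=
      (Complex.continuous_re.comp (hcont.add (hcont.comp continuous_neg)))
    exact this.congr fun p => (hA_eq p).symm
  -- |hata p| ≤ 1
  have h_abs_le_one : ∀ p, ‖hata p‖ ≤ 1 := by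
    intro p
    rw [hhat]
    have hnorm : ∀ u : EuclideanSpace ℝ (Fin d),
        ‖Complex.exp (-(Complex.I * ((inner ℝ p u : ℝ) : ℂ))) * (a u : ℂ)‖ = a u := by
      intro u
      rw [norm_mul, Complex.norm_exp]
      simp [abs_of_nonneg (ha_nn u)]
    calc ‖∫ u, Complex.exp (-(Complex.I * ((inner ℝ p u : ℝ) : ℂ))) * (a u : ℂ)‖
        = ‖∫ u, Complex.exp (-(Complex.I * ((inner ℝ p u : ℝ) : ℂ))) * (a u : ℂ)‖ := rfl
      _ ≤ ∫ u, ‖Complex.exp (-(Complex.I * ((inner ℝ p u : ℝ) : ℂ))) * (a u : ℂ)‖ :=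
          norm_integral_le_integral_norm _
      _ = ∫ u, a u := by simp_rw [hnorm]
      _ = 1 := ha_norm
  -- positivity of denominator for p ≠ 0
  have h_den_pos : ∀ p : EuclideanSpace ℝ (Fin d), p ≠ 0 → 0 < 2 - A p := by
    intro p hp
    have h1 : A p ≤ ‖hata p‖ + ‖hata (-p)‖ := by
      rw [hA_eq p]
      refine le_trans (Complex.re_le_norm _) ?_
      exact norm_add_le _ _
    have h2 := hlt p hp
    have h3 := hlt (-p) (neg_ne_zero.2 hp)
    linarith
  -- near-zero bound
  have hexp' := hexp.def (half_pos hc₁)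
  rw [Metric.eventually_nhds_iff] at hexp'
  obtain ⟨δ, hδ, hball⟩ := hexp'
  have hnear : ∀ p : EuclideanSpace ℝ (Fin d), ‖p‖ < δ → c₁ / 2 * ‖p‖ ^ α ≤ 2 - A p := by
    intro p hp
    have := hball (by simpa [dist_zero_right] using hp)
    rw [Real.norm_eq_abs, Real.norm_of_nonneg (Real.rpow_nonneg (norm_nonneg _) _)] at this
    have h2 := abs_le.1 this
    nlinarith [h2.1, h2.2]
  -- decay at infinity
  obtain ⟨R₀, hR₀⟩ : ∃ R₀ : ℝ, ∀ p : EuclideanSpace ℝ (Fin d), R₀ < ‖p‖ →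
      ‖hata p‖ ≤ 1/2 := by
    have hnh : ∀ᶠ z : ℂ in nhds 0, ‖z‖ ≤ 1/2 := by
      filter_upwards [Metric.ball_mem_nhds (0:ℂ) (by norm_num : (0:ℝ) < 1/2)] with z hz
      rw [Metric.mem_ball, dist_zero_right] at hz
      exact le_of_lt hz
    have hev : ∀ᶠ p in cocompact (EuclideanSpace ℝ (Fin d)), ‖hata p‖ ≤ 1/2 :=
      hdecay.eventually hnh
    rw [Filter.eventually_iff, Filter.mem_cocompact] at hev
    obtain ⟨K, hK, hKsub⟩ := hev
    obtain ⟨R₀, hR₀⟩ := hK.isBounded.subset_closedBall 0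
    refine ⟨R₀, fun p hp => ?_⟩
    have hpK : p ∉ K := fun h => not_lt.2 (mem_closedBall_zero_iff.1 (hR₀ h)) hp
    exact hKsub hpK
  -- uniform lower bound away from zero
  set R : ℝ := max (R₀ + 1) δ with hR_def
  set S : Set (EuclideanSpace ℝ (Fin d)) := closedBall 0 R \ ball 0 δ with hS_def
  have hScpt : IsCompact S := (isCompact_closedBall _ _).diff isOpen_ball
  have hSne : S.Nonempty := by
    refine ⟨EuclideanSpace.single (⟨0, hd0⟩ : Fin d) δ, ?_, ?_⟩
    · rw [mem_closedBall_zero_iff, EuclideanSpace.norm_single]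
      rw [Real.norm_of_nonneg hδ.le]
      exact le_max_right _ _
    · rw [mem_ball_zero_iff, EuclideanSpace.norm_single, Real.norm_of_nonneg hδ.le]
      exact lt_irrefl δ
  obtain ⟨p₀, hp₀S, hmin⟩ := hScpt.exists_isMinOn hSne
    ((continuous_const.sub hA_cont).continuousOn)
  have hp₀ne : p₀ ≠ 0 := by
    intro h
    have := hp₀S.2
    rw [h, mem_ball_zero_iff, norm_zero] at this
    exact this hδ
  set m : ℝ := min (2 - A p₀) 1 with hm_def
  have hm : 0 < m := lt_min (h_den_pos p₀ hp₀ne) one_pos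
  have hfar : ∀ p : EuclideanSpace ℝ (Fin d), δ ≤ ‖p‖ → m ≤ 2 - A p := by
    intro p hp
    by_cases hpR : ‖p‖ ≤ R
    · refine le_trans (min_le_left _ _) (hmin (⟨?_, ?_⟩ : p ∈ S))
      · rwa [mem_closedBall_zero_iff]
      · rw [mem_ball_zero_iff]; exact not_lt.2 hp
    · push_neg at hpR
      have hpR₀ : R₀ < ‖p‖ := lt_of_lt_of_le (lt_of_lt_of_le (lt_add_one R₀)
        (le_max_left _ _)) hpR.le
      have h1 := hR₀ p hpR₀
      have h2 := hR₀ (-p) (by rwa [norm_neg])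
      have h3 : A p ≤ 1 := by
        rw [hA_eq p]
        refine le_trans (Complex.re_le_norm _) (le_trans (norm_add_le _ _) ?_)
        linarith
      refine le_trans (min_le_right _ _) (by linarith)
  -- measurability
  have hf_meas : AEStronglyMeasurable
      (fun p : EuclideanSpace ℝ (Fin d) => ‖hata p‖ / (2 - A p)) volume :=
    ((continuous_norm.comp hcont).measurable.div
      (continuous_const.sub hA_cont).measurable).aestronglyMeasurable
  -- a.e. nonzero
  haveI : Nontrivial (EuclideanSpace ℝ (Fin d)) := by
    refine ⟨EuclideanSpace.single (⟨0, hd0⟩ : Fin d) 1, 0, fun h => ?_⟩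
    have := congrArg norm h
    rw [EuclideanSpace.norm_single, norm_zero] at this
    norm_num at this
  have h0ae : ∀ᵐ p : EuclideanSpace ℝ (Fin d), p ≠ 0 := by
    rw [ae_iff]
    have : {p : EuclideanSpace ℝ (Fin d) | ¬p ≠ 0} = {0} := by ext p; simp
    rw [this]
    exact measure_singleton 0
  -- integrable on ball
  have hI1 : IntegrableOn (fun p => ‖hata p‖ / (2 - A p))
      (ball (0 : EuclideanSpace ℝ (Fin d)) δ) := by
    refine Integrable.mono' ((aux_ball_rpow hd0 hα0 hαd hδ).const_mul (2 / c₁))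
      hf_meas.restrict ?_
    rw [ae_restrict_iff' measurableSet_ball]
    filter_upwards [h0ae] with p hp0 hpball
    rw [mem_ball_zero_iff] at hpball
    have hden := hnear p hpball
    have hdp : 0 < c₁ / 2 * ‖p‖ ^ α := by
      have : (0:ℝ) < ‖p‖ := norm_pos_iff.2 hp0
      positivity
    have hfnn : 0 ≤ ‖hata p‖ / (2 - A p) :=
      div_nonneg (norm_nonneg _) (by linarith)
    rw [Real.norm_of_nonneg hfnn]
    calc ‖hata p‖ / (2 - A p) ≤ 1 / (c₁ / 2 * ‖p‖ ^ α) :=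
          div_le_div₀ zero_le_one (h_abs_le_one p) hdp hden
      _ = 2 / c₁ * ‖p‖ ^ (-α) := by
          rw [Real.rpow_neg (norm_nonneg _)]
          rw [one_div, mul_inv]
          ring_nf
  -- integrable off ball
  have hI2 : IntegrableOn (fun p => ‖hata p‖ / (2 - A p))
      (ball (0 : EuclideanSpace ℝ (Fin d)) δ)ᶜ := by
    refine Integrable.mono' ((hhat_int.const_mul m⁻¹).integrableOn) hf_meas.restrict ?_
    rw [ae_restrict_iff' measurableSet_ball.compl]
    filter_upwards [h0ae] with p hp0 hpc
    rw [mem_compl_iff, mem_ball_zero_iff, not_lt] at hpc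
    have hden := hfar p hpc
    have hfnn : 0 ≤ ‖hata p‖ / (2 - A p) :=
      div_nonneg (norm_nonneg _) (by linarith)
    rw [Real.norm_of_nonneg hfnn]
    calc ‖hata p‖ / (2 - A p) ≤ ‖hata p‖ / m :=
          div_le_div_of_nonneg_left (norm_nonneg _) hm hden
      _ = m⁻¹ * ‖hata p‖ := by rw [div_eq_inv_mul]
  have := hI1.union hI2
  rwa [Set.union_compl_self, integrableOn_univ] at this
end

section
/- Let d = 1 and suppose 2 - h(p) = c₁|p|^α + o(|p|^α) as p → 0 with c₁ > 0, 1 ≤ α < 2, h continuous, h(p) < 2 for p ≠ 0, h(p) → 0 as |p| → ∞, and 0 ≤ ψ ≤ 2 continuous integrable with ψ(0) = 2. Then by scaling p = s^{-1/α} q one has liminf_{s→∞} s^{1/α} ∫_ℝ e^{s(h(p)-2)} ψ(p) dp > 0. -/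
open MeasureTheory Filter Asymptotics

section Aux

open Set Real Bornology

lemma aux_intG {b p : ℝ} (hb : 0 < b) (hp : 1 ≤ p) :
    Integrable (fun x : ℝ => Real.exp (-b * |x| ^ p)) := by
  have hI : IntegrableOn (fun x : ℝ => Real.exp (-b * |x| ^ p)) (Ioi 0) := by
    have h := integrableOn_rpow_mul_exp_neg_mul_rpow (s := 0) (by norm_num) (by linarith) hb
    refine h.congr_fun (fun x hx => ?_) measurableSet_Ioi
    dsimp only
    rw [Real.rpow_zero, one_mul, abs_of_pos hx]
  rw [← integrableOn_univ, ← Set.Iio_union_Ici (a := (0:ℝ)), integrableOn_union,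
    integrableOn_Ici_iff_integrableOn_Ioi]
  refine ⟨?_, hI⟩
  rw [← (Measure.measurePreserving_neg (volume : Measure ℝ)).integrableOn_comp_preimage
      (Homeomorph.neg ℝ).measurableEmbedding]
  simpa only [Function.comp_def, abs_neg, neg_preimage, neg_Iio, neg_neg, neg_zero] using hI

lemma aux_gap {h : ℝ → ℝ} (hh_cont : Continuous h) (hh_lt : ∀ p : ℝ, p ≠ 0 → h p < 2)
    (hh_decay : Tendsto h (cocompact ℝ) (nhds 0)) {δ : ℝ} (hδ : 0 < δ) :
    ∃ ε > 0, ∀ p : ℝ, δ ≤ |p| → h p ≤ 2 - ε := by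
  have h1 : h ⁻¹' Metric.ball 0 1 ∈ cocompact ℝ :=
    hh_decay (Metric.ball_mem_nhds 0 one_pos)
  obtain ⟨K, hKc, hK⟩ := mem_cocompact.mp h1
  obtain ⟨R, hR⟩ := hKc.isBounded.subset_closedBall 0
  set R' : ℝ := max R δ with hR'
  set S : Set ℝ := Icc (-R') R' ∩ {p : ℝ | δ ≤ |p|} with hS
  have hScomp : IsCompact S :=
    isCompact_Icc.inter_right (isClosed_le continuous_const continuous_abs)
  have hSne : S.Nonempty := by
    refine ⟨δ, ⟨?_, le_max_right R δ⟩, ?_⟩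
    · linarith [le_max_right R δ, hδ]
    · simp [abs_of_pos hδ]
  obtain ⟨x, hxS, hx⟩ := hScomp.exists_isMaxOn hSne hh_cont.continuousOn
  have hx0 : x ≠ 0 := by
    intro h0
    have := hxS.2
    rw [h0] at this
    simp at this
    linarith
  have hm : h x < 2 := hh_lt x hx0
  refine ⟨min 1 (2 - h x), lt_min one_pos (by linarith), fun p hp => ?_⟩
  rcases le_or_gt |p| R' with hc | hc
  · have hpS : p ∈ S := ⟨abs_le.mp hc, hp⟩
    have h1 := hx hpS
    have h2 : min 1 (2 - h x) ≤ 2 - h x := min_le_right _ _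
    simp only [Set.mem_setOf_eq] at h1
    linarith
  · have hpK : p ∉ K := by
      intro hpK
      have h3 := hR hpK
      rw [Metric.mem_closedBall, Real.dist_eq, sub_zero] at h3
      have : |p| ≤ R' := h3.trans (le_max_left R δ)
      linarith
    have h4 := hK hpK
    rw [Set.mem_preimage, Metric.mem_ball, Real.dist_eq, sub_zero] at h4
    have h2 : min 1 (2 - h x) ≤ 1 := min_le_left _ _
    have := abs_lt.mp h4
    linarith

end Aux

theorem stmt16 (h ψ : ℝ → ℝ) (c₁ α : ℝ) (hc₁ : 0 < c₁) (hα1 : 1 ≤ α) (hα2 : α < 2)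
    (hh_cont : Continuous h) (hh_lt : ∀ p : ℝ, p ≠ 0 → h p < 2)
    (hh_decay : Tendsto h (cocompact ℝ) (nhds 0))
    (hexp : (fun p : ℝ => (2 - h p) - c₁ * |p| ^ α) =o[nhds 0] fun p : ℝ => |p| ^ α)
    (hψ_cont : Continuous ψ) (hψ_nn : ∀ p, 0 ≤ ψ p) (hψ_le : ∀ p, ψ p ≤ 2)
    (hψ_int : Integrable ψ) (hψ0 : ψ 0 = 2) :
    0 < liminf (fun s : ℝ =>
      s ^ (1 / α) * ∫ p : ℝ, Real.exp (s * (h p - 2)) * ψ p) atTop := by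
  have hα0 : 0 < α := lt_of_lt_of_le one_pos hα1
  have hαne : α ≠ 0 := hα0.ne'
  -- h ≤ 2 everywhere
  have hle2 : ∀ p : ℝ, h p ≤ 2 := by
    intro p
    rcases eq_or_ne p 0 with rfl | hp
    · have ht : Tendsto h (nhdsWithin (0:ℝ) {0}ᶜ) (nhds (h 0)) :=
        (hh_cont.tendsto 0).mono_left nhdsWithin_le_nhds
      refine le_of_tendsto ht ?_
      filter_upwards [self_mem_nhdsWithin] with q hq using (hh_lt q hq).le
    · exact (hh_lt p hp).le
  -- eventual bounds near 0
  have hev1 := hexp.def (half_pos hc₁)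
  have hev2 : ∀ᶠ p : ℝ in nhds 0, 1 < ψ p := by
    have ht : Tendsto ψ (nhds 0) (nhds 2) := by
      have := hψ_cont.tendsto 0
      rwa [hψ0] at this
    exact ht.eventually_const_lt (by norm_num)
  obtain ⟨δ₀, hδ₀, hball⟩ := Metric.eventually_nhds_iff.mp (hev1.and hev2)
  set δ : ℝ := δ₀ / 2 with hδdef
  have hδ : 0 < δ := by positivity
  have hkey : ∀ p : ℝ, |p| ≤ δ →
      (c₁/2) * |p| ^ α ≤ 2 - h p ∧ 2 - h p ≤ 2*c₁*|p| ^ α ∧ 1 ≤ ψ p := by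
    intro p hp
    have hd : dist p 0 < δ₀ := by
      rw [Real.dist_eq, sub_zero]
      calc |p| ≤ δ := hp
      _ < δ₀ := by rw [hδdef]; linarith
    obtain ⟨h1, h2⟩ := hball hd
    rw [Real.norm_eq_abs, Real.norm_eq_abs, abs_of_nonneg (Real.rpow_nonneg (abs_nonneg p) α)] at h1
    have h3 := abs_le.mp h1
    have hx : 0 ≤ |p| ^ α := Real.rpow_nonneg (abs_nonneg p) α
    have hcx : 0 ≤ c₁ * |p| ^ α := mul_nonneg hc₁.le hx
    exact ⟨by linarith [h3.1], by linarith [h3.2], h2.le⟩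
  -- integrability of the integrand
  have hf_int : ∀ s : ℝ, 0 ≤ s → Integrable (fun p => Real.exp (s * (h p - 2)) * ψ p) := by
    intro s hs
    refine hψ_int.mono ?_ (ae_of_all _ fun p => ?_)
    · exact ((continuous_const.mul (hh_cont.sub continuous_const)).rexp.mul hψ_cont).aestronglyMeasurable
    · rw [Real.norm_eq_abs, Real.norm_eq_abs,
        abs_of_nonneg (mul_nonneg (Real.exp_pos _).le (hψ_nn p)), abs_of_nonneg (hψ_nn p)]
      calc Real.exp (s * (h p - 2)) * ψ p ≤ 1 * ψ p := by
            refine mul_le_mul_of_nonneg_right ?_ (hψ_nn p)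
            calc Real.exp (s * (h p - 2)) ≤ Real.exp 0 := by
                  refine Real.exp_le_exp.mpr ?_
                  exact mul_nonpos_of_nonneg_of_nonpos hs (by linarith [hle2 p])
            _ = 1 := Real.exp_zero
      _ = ψ p := one_mul _
  -- lower bound
  have hlow : ∀ᶠ s : ℝ in atTop, 2 * Real.exp (-(2*c₁)) ≤
      s ^ (1 / α) * ∫ p : ℝ, Real.exp (s * (h p - 2)) * ψ p := by
    filter_upwards [eventually_ge_atTop (1:ℝ), eventually_ge_atTop (δ ^ (-α))] with s hs1 hs2
    have hs0 : 0 < s := lt_of_lt_of_le one_pos hs1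
    set t : ℝ := s ^ (-(1/α)) with htdef
    have ht0 : 0 < t := Real.rpow_pos_of_pos hs0 _
    have htα : t ^ α = s⁻¹ := by
      calc t ^ α = s ^ ((-(1/α)) * α) := (Real.rpow_mul hs0.le _ _).symm
      _ = s ^ (-1 : ℝ) := by rw [neg_mul, one_div, inv_mul_cancel₀ hαne]
      _ = s⁻¹ := Real.rpow_neg_one s
    have htδ : t ≤ δ := by
      have h1 : s ^ (-(1/α)) ≤ (δ ^ (-α)) ^ (-(1/α)) :=
        Real.rpow_le_rpow_of_nonpos (Real.rpow_pos_of_pos hδ _) hs2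
          (by rw [neg_nonpos]; positivity)
      calc t ≤ (δ ^ (-α)) ^ (-(1/α)) := h1
      _ = δ := by
          rw [← Real.rpow_mul hδ.le, neg_mul_neg, mul_one_div, div_self hαne, Real.rpow_one]
    have hpt : ∀ p ∈ Set.Icc (-t) t,
        Real.exp (-(2*c₁)) ≤ Real.exp (s * (h p - 2)) * ψ p := by
      intro p hp
      have hpt' : |p| ≤ t := abs_le.mpr ⟨hp.1, hp.2⟩
      obtain ⟨hk1, hk2, hk3⟩ := hkey p (hpt'.trans htδ)
      have hpow : |p| ^ α ≤ s⁻¹ := by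
        rw [← htα]; exact Real.rpow_le_rpow (abs_nonneg p) hpt' hα0.le
      have h4 : s * (2 - h p) ≤ 2 * c₁ := by
        calc s * (2 - h p) ≤ s * (2*c₁*|p| ^ α) := mul_le_mul_of_nonneg_left hk2 hs0.le
        _ = 2*c₁*(s * |p| ^ α) := by ring
        _ ≤ 2*c₁*1 := by
            refine mul_le_mul_of_nonneg_left ?_ (by positivity)
            calc s * |p| ^ α ≤ s * s⁻¹ := mul_le_mul_of_nonneg_left hpow hs0.le
            _ = 1 := mul_inv_cancel₀ hs0.ne'
        _ = 2*c₁ := mul_one _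
      calc Real.exp (-(2*c₁)) = Real.exp (-(2*c₁)) * 1 := (mul_one _).symm
      _ ≤ Real.exp (s * (h p - 2)) * ψ p :=
          mul_le_mul (Real.exp_le_exp.mpr (by linarith)) hk3 one_pos.le (Real.exp_pos _).le
    have hIf := hf_int s hs0.le
    have hnn : ∀ p, 0 ≤ Real.exp (s * (h p - 2)) * ψ p :=
      fun p => mul_nonneg (Real.exp_pos _).le (hψ_nn p)
    have hset : Real.exp (-(2*c₁)) * (2*t) ≤
        ∫ p in Set.Icc (-t) t, Real.exp (s * (h p - 2)) * ψ p := by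
      have h1 : ∫ _ in Set.Icc (-t) t, Real.exp (-(2*c₁)) ≤
          ∫ p in Set.Icc (-t) t, Real.exp (s * (h p - 2)) * ψ p :=
        setIntegral_mono_on ((integrableOn_const_iff (C := Real.exp (-(2*c₁)))).mpr
          (Or.inr (by rw [Real.volume_Icc]; exact ENNReal.ofReal_lt_top)))
          hIf.integrableOn measurableSet_Icc hpt
      rw [setIntegral_const, Real.volume_real_Icc_of_le (by linarith), smul_eq_mul] at h1
      calc Real.exp (-(2*c₁)) * (2*t) = (t - -t) * Real.exp (-(2*c₁)) := by ring
      _ ≤ _ := h1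
    have hfull : ∫ p in Set.Icc (-t) t, Real.exp (s * (h p - 2)) * ψ p ≤
        ∫ p : ℝ, Real.exp (s * (h p - 2)) * ψ p :=
      setIntegral_le_integral hIf (ae_of_all _ hnn)
    have hst : s ^ (1/α) * t = 1 := by
      rw [htdef, ← Real.rpow_add hs0]
      simp
    calc 2 * Real.exp (-(2*c₁)) = (s ^ (1/α) * t) * (Real.exp (-(2*c₁)) * 2) := by
          rw [hst]; ring
    _ = s ^ (1/α) * (Real.exp (-(2*c₁)) * (2*t)) := by ring
    _ ≤ s ^ (1/α) * ∫ p : ℝ, Real.exp (s * (h p - 2)) * ψ p :=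
        mul_le_mul_of_nonneg_left (hset.trans hfull) (Real.rpow_nonneg hs0.le _)
  -- upper bound
  obtain ⟨ε, hε, hgap⟩ := aux_gap hh_cont hh_lt hh_decay hδ
  set g : ℝ → ℝ := fun q => Real.exp (-(c₁/2) * |q| ^ α) with hgdef
  have hgint : Integrable g := aux_intG (by positivity) hα1
  set C : ℝ := ∫ q, g q with hCdef
  have hC0 : 0 ≤ C := integral_nonneg fun q => (Real.exp_pos _).le
  set M : ℝ := ∫ p, ψ p with hMdef
  have hup : ∀ᶠ s : ℝ in atTop,
      s ^ (1 / α) * ∫ p : ℝ, Real.exp (s * (h p - 2)) * ψ p ≤ 2*C + 1 := by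
    have htend : Tendsto (fun s : ℝ => s ^ (1/α) * Real.exp (-ε * s) * M) atTop (nhds 0) := by
      simpa using (tendsto_rpow_mul_exp_neg_mul_atTop_nhds_zero (1/α) ε hε).mul_const M
    filter_upwards [eventually_ge_atTop (1:ℝ),
      htend.eventually_lt_const (by norm_num : (0:ℝ) < 1)] with s hs1 hsmall
    have hs0 : 0 < s := lt_of_lt_of_le one_pos hs1
    set a : ℝ := s ^ (1/α) with hadef
    have ha0 : 0 < a := Real.rpow_pos_of_pos hs0 _
    have haα : a ^ α = s := by
      rw [hadef, ← Real.rpow_mul hs0.le, one_div, inv_mul_cancel₀ hαne, Real.rpow_one]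
    have habs : ∀ p : ℝ, |a * p| ^ α = s * |p| ^ α := by
      intro p
      rw [abs_mul, Real.mul_rpow (abs_nonneg a) (abs_nonneg p), abs_of_pos ha0, haα]
    have hIf := hf_int s hs0.le
    have hmaj_int : Integrable (fun p : ℝ => g (a * p) * 2) :=
      ((integrable_comp_mul_left_iff g ha0.ne').mpr hgint).mul_const 2
    have h1 : ∫ p in Set.Icc (-δ) δ, Real.exp (s * (h p - 2)) * ψ p ≤
        ∫ p in Set.Icc (-δ) δ, g (a*p) * 2 := by
      refine setIntegral_mono_on hIf.integrableOn hmaj_int.integrableOn measurableSet_Icc ?_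
      intro p hp
      obtain ⟨hk1, _, _⟩ := hkey p (abs_le.mpr ⟨hp.1, hp.2⟩)
      have hexp2 : s * (h p - 2) ≤ -(c₁/2) * |a*p| ^ α := by
        rw [habs p]
        have h5 := mul_le_mul_of_nonneg_left hk1 hs0.le
        nlinarith
      exact mul_le_mul (Real.exp_le_exp.mpr hexp2) (hψ_le p) (hψ_nn p) (Real.exp_pos _).le
    have h2 : ∫ p in Set.Icc (-δ) δ, g (a*p) * 2 ≤ ∫ p : ℝ, g (a*p) * 2 :=
      setIntegral_le_integral hmaj_int (ae_of_all _ fun p =>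
        mul_nonneg (Real.exp_pos _).le (by norm_num))
    have h3 : ∫ p : ℝ, g (a*p) * 2 = a⁻¹ * C * 2 := by
      rw [integral_mul_const, MeasureTheory.Measure.integral_comp_mul_left g a, abs_of_pos (inv_pos.mpr ha0),
        smul_eq_mul]
    have h4 : ∫ p in (Set.Icc (-δ) δ)ᶜ, Real.exp (s * (h p - 2)) * ψ p ≤
        ∫ p in (Set.Icc (-δ) δ)ᶜ, Real.exp (-ε*s) * ψ p := by
      refine setIntegral_mono_on hIf.integrableOn
        ((hψ_int.const_mul _).integrableOn) measurableSet_Icc.compl ?_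
      intro p hp
      have hpδ : δ ≤ |p| := by
        simp only [Set.mem_compl_iff, Set.mem_Icc, not_and_or, not_le] at hp
        rcases hp with hp | hp
        · exact le_abs.mpr (Or.inr (by linarith))
        · exact le_abs.mpr (Or.inl hp.le)
      have hg2 := hgap p hpδ
      refine mul_le_mul (Real.exp_le_exp.mpr ?_) le_rfl (hψ_nn p) (Real.exp_pos _).le
      nlinarith
    have h5 : ∫ p in (Set.Icc (-δ) δ)ᶜ, Real.exp (-ε*s) * ψ p ≤ Real.exp (-ε*s) * M := by
      have h6 := setIntegral_le_integral (s := (Set.Icc (-δ) δ)ᶜ)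
        (hψ_int.const_mul (Real.exp (-ε*s)))
        (ae_of_all _ fun p => mul_nonneg (Real.exp_pos _).le (hψ_nn p))
      exact h6.trans_eq (integral_const_mul _ _)
    have hsplit := (integral_add_compl (measurableSet_Icc (a := -δ) (b := δ)) hIf).symm
    have haainv : a * a⁻¹ = 1 := mul_inv_cancel₀ ha0.ne'
    calc s ^ (1 / α) * ∫ p : ℝ, Real.exp (s * (h p - 2)) * ψ p
        = a * ((∫ p in Set.Icc (-δ) δ, Real.exp (s * (h p - 2)) * ψ p) +
            ∫ p in (Set.Icc (-δ) δ)ᶜ, Real.exp (s * (h p - 2)) * ψ p) := by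
          rw [hsplit]
    _ ≤ a * (a⁻¹ * C * 2 + Real.exp (-ε*s) * M) :=
        mul_le_mul_of_nonneg_left
          (add_le_add (h1.trans (h2.trans_eq h3)) (h4.trans h5)) ha0.le
    _ = 2*C*(a*a⁻¹) + a * Real.exp (-ε*s) * M := by ring
    _ = 2*C + s ^ (1/α) * Real.exp (-ε*s) * M := by rw [haainv, hadef]; ring
    _ ≤ 2*C + 1 := by linarith
  have hbdd : IsBoundedUnder (· ≤ ·) atTop (fun s : ℝ =>
      s ^ (1 / α) * ∫ p : ℝ, Real.exp (s * (h p - 2)) * ψ p) :=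
    ⟨2*C+1, eventually_map.mpr hup⟩
  have hfin := le_liminf_of_le hbdd.isCoboundedUnder_ge hlow
  calc (0:ℝ) < 2 * Real.exp (-(2*c₁)) := by positivity
  _ ≤ _ := hfin
end
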